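/- arXiv:math/9707208 — 2 statements merged into one kernel-verified Lean document; each statement's English description precedes it below -/
import Mathlib

section
/- Let X be a first countable compact Hausdorff topological space with at least three points and let φ : C(X,ℂ) → C(X,ℂ) be a diameter preserving linear bijection. Then for every pair of points x, y ∈ X with x ≠ y and every nonzero complex number u, the set H(x,y,u) = ⋂{ T(φ(f)) : f ∈ C(X,ℂ), (x,y,u) ∈ T(f) } is nonempty. -/
/-- `S(f)`: the set of two-element subsets `{x,y}` of `X` with
`|f(x) - f(y)| = diam(f(X))`. -/
def diamSet {X : Type*} [TopologicalSpace X] (f : C(X, ℂ)) : Set (Set X) :=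
  {s | ∃ x y : X, x ≠ y ∧ s = {x, y} ∧
    ‖f x - f y‖ = Metric.diam (Set.range ⇑f)}

/-- `T(f)`: the set of triples `(x,y,u)` with `|f(x) - f(y)| = diam(f(X))` and
`u = f(x) - f(y)`. -/
def diamTriple {X : Type*} [TopologicalSpace X] (f : C(X, ℂ)) : Set (X × X × ℂ) :=
  {p | ‖f p.1 - f p.2.1‖ = Metric.diam (Set.range ⇑f) ∧
    p.2.2 = f p.1 - f p.2.1}

/-- `G(s) = ⋂ { S(φ(f)) : f ∈ C(X,ℂ), s ∈ S(f) }`. -/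
def Gset {X : Type*} [TopologicalSpace X] (φ : C(X, ℂ) → C(X, ℂ)) (s : Set X) :
    Set (Set X) :=
  {t | ∀ f : C(X, ℂ), s ∈ diamSet f → t ∈ diamSet (φ f)}

/-- `H(x,y,u) = ⋂ { T(φ(f)) : f ∈ C(X,ℂ), (x,y,u) ∈ T(f) }`. -/
def Hset {X : Type*} [TopologicalSpace X] (φ : C(X, ℂ) → C(X, ℂ)) (x y : X) (u : ℂ) :
    Set (X × X × ℂ) :=
  {p | ∀ f : C(X, ℂ), (x, y, u) ∈ diamTriple f → p ∈ diamTriple (φ f)}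

/-- `φ` is diameter preserving: `diam(φ(f)(X)) = diam(f(X))` for all `f`. -/
def DiamPreserving {X : Type*} [TopologicalSpace X] (φ : C(X, ℂ) → C(X, ℂ)) : Prop :=
  ∀ f : C(X, ℂ), Metric.diam (Set.range ⇑(φ f)) = Metric.diam (Set.range ⇑f)

/-- The collection of two-element subsets of `X`. -/
abbrev TwoSet (X : Type*) := {s : Set X // ∃ a b : X, a ≠ b ∧ s = {a, b}}

/-! The functions `f` with `(x, y, u) ∈ T(f)` all satisfy `f x - f y = u` and have range of
diameter `‖u‖`, so a sum `g` of `n` of them has `g x - g y = n u` and range of diameter exactly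
`n ‖u‖`. Hence `φ g` has diameter `n ‖u‖`, attained at some pair `(p, q)`, while each summand
`φ f p - φ f q` of `φ g p - φ g q` has norm at most `‖u‖`. In an inner product space, points of
a ball whose average lies on the boundary sphere all coincide, so `(p, q, (φ g p - φ g q) / n)`
lies in every `T(φ f)`. The sets `T(φ f)` are closed in the compact set `X × X × sphere 0 ‖u‖`,
so this finite intersection property gives a common point. -/

open Metric Set Finset

theorem eq_of_norm_le_of_sum_eq_card_nsmul {ι E : Type*} [NormedAddCommGroup E]
    [InnerProductSpace ℝ E] {t : Finset ι} {a : ι → E} {w : E}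
    (ha : ∀ i ∈ t, ‖a i‖ ≤ ‖w‖) (hsum : ∑ i ∈ t, a i = #t • w) : ∀ i ∈ t, a i = w := by
  have hvar : ∑ i ∈ t, ‖a i - w‖ ^ 2 = ∑ i ∈ t, ‖a i‖ ^ 2 - #t * ‖w‖ ^ 2 := by
    simp_rw [norm_sub_sq_real]
    rw [sum_add_distrib, sum_sub_distrib, ← mul_sum, ← sum_inner, hsum,
      ← Nat.cast_smul_eq_nsmul ℝ, real_inner_smul_left, real_inner_self_eq_norm_sq, sum_const,
      nsmul_eq_mul]
    ring
  have hsq : ∑ i ∈ t, ‖a i‖ ^ 2 ≤ #t * ‖w‖ ^ 2 := by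
    rw [← nsmul_eq_mul, ← sum_const]
    exact sum_le_sum fun i hi => pow_le_pow_left₀ (norm_nonneg _) (ha i hi) 2
  have hzero : ∑ i ∈ t, ‖a i - w‖ ^ 2 = 0 :=
    le_antisymm (by linarith) (sum_nonneg fun _ _ => by positivity)
  intro i hi
  have := (sum_eq_zero_iff_of_nonneg fun _ _ => by positivity).mp hzero i hi
  simpa [sub_eq_zero] using this

section RangeDiameter

variable {X E : Type*} [TopologicalSpace X] [CompactSpace X] [SeminormedAddCommGroup E]

theorem ContinuousMap.norm_sub_le_diam_range (f : C(X, E)) (a b : X) :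
    ‖f a - f b‖ ≤ diam (range f) := by
  rw [← dist_eq_norm]
  exact dist_le_diam_of_mem (isCompact_range f.continuous).isBounded
    (mem_range_self a) (mem_range_self b)

theorem ContinuousMap.exists_norm_sub_eq_diam_range [Nonempty X] (f : C(X, E)) :
    ∃ a b, ‖f a - f b‖ = diam (range f) := by
  obtain ⟨⟨a, b⟩, -, hmax⟩ := isCompact_univ.exists_isMaxOn univ_nonempty
    (show Continuous fun z : X × X => ‖f z.1 - f z.2‖ by fun_prop).continuousOn
  refine ⟨a, b, le_antisymm (f.norm_sub_le_diam_range a b) ?_⟩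
  refine diam_le_of_forall_dist_le (norm_nonneg _) ?_
  rintro _ ⟨c, rfl⟩ _ ⟨e, rfl⟩
  rw [dist_eq_norm]
  exact hmax (mem_univ (c, e))

theorem ContinuousMap.diam_range_sum_le {ι : Type*} (t : Finset ι) (f : ι → C(X, E)) :
    diam (range ⇑(∑ i ∈ t, f i)) ≤ ∑ i ∈ t, diam (range (f i)) := by
  refine diam_le_of_forall_dist_le (sum_nonneg fun _ _ => diam_nonneg) ?_
  rintro _ ⟨a, rfl⟩ _ ⟨b, rfl⟩
  simp only [ContinuousMap.coe_sum, Finset.sum_apply]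
  exact (dist_sum_sum_le _ _ _).trans
    (sum_le_sum fun i _ => by rw [dist_eq_norm]; exact (f i).norm_sub_le_diam_range a b)

end RangeDiameter

section DiamTriple

variable {X : Type*} [TopologicalSpace X]

theorem isClosed_diamTriple (g : C(X, ℂ)) : IsClosed (diamTriple g) :=
  (isClosed_eq (by fun_prop) continuous_const).inter (isClosed_eq (by fun_prop) (by fun_prop))

theorem diam_range_eq_and_sub_eq_of_mem_diamTriple {f : C(X, ℂ)} {x y : X} {u : ℂ}
    (h : (x, y, u) ∈ diamTriple f) : diam (range f) = ‖u‖ ∧ f x - f y = u := by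
  obtain ⟨hdiam, hu : u = f x - f y⟩ := h
  exact ⟨by rw [hu, ← hdiam], hu.symm⟩

theorem exists_forall_mem_diamTriple_map [CompactSpace X] {φ : C(X, ℂ) →ₗ[ℂ] C(X, ℂ)}
    (hdp : DiamPreserving ⇑φ) {x y : X} {u : ℂ} {ι : Type*} {f : ι → C(X, ℂ)}
    (hf : ∀ i, (x, y, u) ∈ diamTriple (f i)) {t : Finset ι} (ht : t.Nonempty) :
    ∃ P ∈ (univ ×ˢ univ ×ˢ sphere (0 : ℂ) ‖u‖ : Set (X × X × ℂ)),
      ∀ i ∈ t, P ∈ diamTriple (φ (f i)) := by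
  have hfu i := diam_range_eq_and_sub_eq_of_mem_diamTriple (hf i)
  set g := ∑ i ∈ t, f i
  have hg : diam (range (φ g)) = #t * ‖u‖ := by
    rw [hdp]
    refine le_antisymm ?_ ?_
    · calc diam (range g) ≤ ∑ i ∈ t, diam (range (f i)) := ContinuousMap.diam_range_sum_le t f
        _ = #t * ‖u‖ := by simp [hfu]
    · calc (#t : ℝ) * ‖u‖ = ‖g x - g y‖ := by
            simp [g, ← sum_sub_distrib, hfu]
        _ ≤ diam (range g) := g.norm_sub_le_diam_range x y
  have : Nonempty X := ⟨x⟩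
  obtain ⟨p, q, hpq⟩ := (φ g).exists_norm_sub_eq_diam_range
  have hn : (#t : ℂ) ≠ 0 := Nat.cast_ne_zero.mpr ht.card_pos.ne'
  set w : ℂ := (#t : ℂ)⁻¹ * (φ g p - φ g q)
  have hw : ‖w‖ = ‖u‖ := by
    rw [norm_mul, hpq, hg, norm_inv, Complex.norm_natCast]
    field_simp [ht.card_pos.ne']
  have hsum : ∑ i ∈ t, (φ (f i) p - φ (f i) q) = #t • w := by
    simp [w, g, map_sum, sum_sub_distrib, nsmul_eq_mul, mul_inv_cancel_left₀ hn]
  have hle i : ‖φ (f i) p - φ (f i) q‖ ≤ ‖w‖ := by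
    rw [hw, ← (hfu i).1, ← hdp]
    exact (φ (f i)).norm_sub_le_diam_range p q
  have hconst := eq_of_norm_le_of_sum_eq_card_nsmul (fun i _ => hle i) hsum
  refine ⟨(p, q, w), by simp [hw], fun i hi => ⟨?_, (hconst i hi).symm⟩⟩
  rw [hconst i hi, hw, hdp, (hfu i).1]

end DiamTriple

theorem Hset_nonempty_general
    {X : Type*} [TopologicalSpace X] [CompactSpace X]
    (φ : C(X, ℂ) →ₗ[ℂ] C(X, ℂ))
    (hdp : DiamPreserving (⇑φ)) (x y : X) (u : ℂ) :
    (Hset (⇑φ) x y u).Nonempty := by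
  have hK : IsCompact (univ ×ˢ univ ×ˢ sphere (0 : ℂ) ‖u‖ : Set (X × X × ℂ)) :=
    isCompact_univ.prod (isCompact_univ.prod (isCompact_sphere 0 ‖u‖))
  obtain ⟨P, -, hP⟩ := hK.inter_iInter_nonempty
    (fun f : {f : C(X, ℂ) // (x, y, u) ∈ diamTriple f} => diamTriple (φ f))
    (fun f => isClosed_diamTriple _) fun t => by
      rcases t.eq_empty_or_nonempty with rfl | ht
      · exact ⟨(x, x, u), by simp⟩
      · obtain ⟨P, hPK, hPt⟩ := exists_forall_mem_diamTriple_map hdp (fun f => f.2) ht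
        exact ⟨P, hPK, mem_iInter₂.mpr hPt⟩
  exact ⟨P, fun f hf => mem_iInter.mp hP ⟨f, hf⟩⟩

/-- Step 1 (second part): for a diameter preserving linear bijection of `C(X,ℂ)` on a
first countable compact Hausdorff space with at least three points, the set
`H(x,y,u)` is nonempty for every pair `x ≠ y` and every `u ≠ 0`. -/
theorem Hset_nonempty
    {X : Type*} [TopologicalSpace X] [CompactSpace X] [T2Space X]
    [FirstCountableTopology X]
    (h3 : ∃ a b c : X, a ≠ b ∧ a ≠ c ∧ b ≠ c)
    (φ : C(X, ℂ) →ₗ[ℂ] C(X, ℂ)) (hbij : Function.Bijective φ)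
    (hdp : DiamPreserving (⇑φ)) (x y : X) (hxy : x ≠ y) (u : ℂ) (hu : u ≠ 0) :
    (Hset (⇑φ) x y u).Nonempty :=
  Hset_nonempty_general φ hdp x y u
end

section
/- Let X be a first countable compact Hausdorff topological space with at least three points and let φ : C(X,ℂ) → C(X,ℂ) be a diameter preserving linear bijection. Let {x,y} be a two-element subset of X and let f ∈ C(X,ℂ). If S(φ(f)) = G({x,y}), then S(f) = {{x,y}}. -/
/-!
A peak function for `{x, y}` takes values in `[-1, 1]`, equals `1` exactly at `x` and `-1` exactly
at `y` (it exists because points of `X` are `G_δ`), so it attains its diameter only at `{x, y}`.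
Diameters add, `diam (g + h) = diam g + diam h`, iff `g` and `h` attain their diameters at a common
pair with aligned increments; as `φ` is linear and diameter preserving, this passes between `g, h`
and `φ g, φ h`. Consequently, at a pair of `G({x, y})` the increment of `φ g` is proportional to
`g x - g y` for every `g` attaining its diameter at `{x, y}`.

If `f` were constant, `G({x, y})` would contain every pair, and proportionality would force any two
functions with values in `[-1, 1]` that equal `1` at `x` and `-1` at `y` to differ by a constant,
which fails for a peak function `p` and `p + (1 - p ^ 2) / 2` since `X` has a third point.
Otherwise, adding to `f` a multiple of the peak function of `{x, y}` aligned with `φ f` at a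
diameter pair of `φ f` shows that `f` attains its diameter at `{x, y}`. If it also did at `{c, d}`,
adding to `f` an aligned multiple of the peak function of `{c, d}`, and then one of `{x, y}`, gives
a function whose diameter is attained only where both peak functions attain theirs, so
`{c, d} = {x, y}`.
-/

open Metric Set

theorem norm_eq_and_sameRay_of_le_norm_add {E : Type*} [NormedAddCommGroup E] [NormedSpace ℝ E]
    [StrictConvexSpace ℝ E] {u v : E} {A B : ℝ} (hu : ‖u‖ ≤ A) (hv : ‖v‖ ≤ B)
    (h : A + B ≤ ‖u + v‖) : ‖u‖ = A ∧ ‖v‖ = B ∧ SameRay ℝ u v := by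
  have := norm_add_le u v
  exact ⟨by linarith, by linarith, sameRay_iff_norm_add.2 (by linarith)⟩

theorem abs_sub_eq_two_of_mem_Icc {a b : ℝ} (ha : a ∈ Icc (-1 : ℝ) 1) (hb : b ∈ Icc (-1 : ℝ) 1)
    (h : |a - b| = 2) : a = 1 ∧ b = -1 ∨ a = -1 ∧ b = 1 := by
  obtain ⟨ha₁, ha₂⟩ := ha
  obtain ⟨hb₁, hb₂⟩ := hb
  rcases abs_eq (zero_le_two : (0 : ℝ) ≤ 2) |>.1 h with h | h
  · left; constructor <;> linarith
  · right; constructor <;> linarith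

theorem exists_ne_ne_of_three {X : Type*} (h3 : ∃ a b c : X, a ≠ b ∧ a ≠ c ∧ b ≠ c) (x y : X) :
    ∃ z, z ≠ x ∧ z ≠ y := by
  obtain ⟨a, b, c, hab, hac, hbc⟩ := h3
  by_contra! h
  rcases eq_or_ne a x with rfl | hax
  · exact hbc ((h b hab.symm).trans (h c hac.symm).symm)
  rcases eq_or_ne b x with rfl | hbx
  · exact hac ((h a hax).trans (h c hbc.symm).symm)
  · exact hab ((h a hax).trans (h b hbx).symm)

namespace ContinuousMap

variable {X E : Type*} [TopologicalSpace X] [NormedAddCommGroup E]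

theorem diam_range_le {g : C(X, E)} {C : ℝ} (hC : 0 ≤ C) (h : ∀ s t, ‖g s - g t‖ ≤ C) :
    diam (range g) ≤ C :=
  diam_le_of_forall_dist_le hC <| by
    rintro _ ⟨s, rfl⟩ _ ⟨t, rfl⟩
    rw [dist_eq_norm]
    exact h s t

theorem diam_range_smul {𝕜 : Type*} [NormedField 𝕜] [NormedSpace 𝕜 E] (c : 𝕜) (g : C(X, E)) :
    diam (range (c • g)) = ‖c‖ * diam (range g) := by
  rw [coe_smul, ← diam_smul₀, ← range_smul]
  rfl

theorem norm_smul_sub_eq_diam_range_iff {𝕜 : Type*} [NormedField 𝕜] [NormedSpace 𝕜 E] {c : 𝕜}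
    (hc : c ≠ 0) {g : C(X, E)} {s t : X} :
    ‖(c • g) s - (c • g) t‖ = diam (range (c • g)) ↔ ‖g s - g t‖ = diam (range g) := by
  rw [diam_range_smul, smul_apply, smul_apply, ← smul_sub, norm_smul,
    mul_right_inj' (norm_ne_zero_iff.2 hc)]

variable [CompactSpace X]

theorem norm_sub_le_diam_range_s11 (g : C(X, E)) (s t : X) : ‖g s - g t‖ ≤ diam (range g) := by
  rw [← dist_eq_norm]
  exact dist_le_diam_of_mem (isCompact_range g.continuous).isBounded
    (mem_range_self s) (mem_range_self t)

theorem exists_norm_sub_eq_diam_range_s11 [Nonempty X] (g : C(X, E)) :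
    ∃ s t, ‖g s - g t‖ = diam (range g) := by
  obtain ⟨⟨s, t⟩, -, hmax⟩ := isCompact_univ.exists_isMaxOn univ_nonempty
    (by fun_prop : Continuous fun q : X × X => ‖g q.1 - g q.2‖).continuousOn
  exact ⟨s, t, le_antisymm (norm_sub_le_diam_range_s11 g s t)
    (diam_range_le (norm_nonneg _) fun s' t' => hmax (mem_univ (s', t')))⟩

variable [NormedSpace ℝ E] {g h : C(X, E)} {s t : X}

theorem diam_range_add_eq_of_sameRay (hg : ‖g s - g t‖ = diam (range g))
    (hh : ‖h s - h t‖ = diam (range h)) (hr : SameRay ℝ (g s - g t) (h s - h t)) :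
    diam (range (g + h)) = diam (range g) + diam (range h) := by
  refine le_antisymm (diam_range_le (add_nonneg diam_nonneg diam_nonneg) fun s' t' => ?_) ?_
  · calc ‖(g + h) s' - (g + h) t'‖ = ‖(g s' - g t') + (h s' - h t')‖ := by
          rw [add_apply, add_apply, add_sub_add_comm]
      _ ≤ ‖g s' - g t'‖ + ‖h s' - h t'‖ := norm_add_le _ _
      _ ≤ diam (range g) + diam (range h) :=
          add_le_add (norm_sub_le_diam_range_s11 g s' t') (norm_sub_le_diam_range_s11 h s' t')
  · calc diam (range g) + diam (range h) = ‖(g + h) s - (g + h) t‖ := by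
          rw [add_apply, add_apply, add_sub_add_comm, hr.norm_add, hg, hh]
      _ ≤ diam (range (g + h)) := norm_sub_le_diam_range_s11 _ s t

variable [StrictConvexSpace ℝ E]

theorem norm_sub_eq_diam_range_of_le
    (hst : diam (range g) + diam (range h) ≤ ‖(g + h) s - (g + h) t‖) :
    ‖g s - g t‖ = diam (range g) ∧ ‖h s - h t‖ = diam (range h) ∧
      SameRay ℝ (g s - g t) (h s - h t) :=
  norm_eq_and_sameRay_of_le_norm_add (norm_sub_le_diam_range_s11 g s t)
    (norm_sub_le_diam_range_s11 h s t) (by rwa [add_apply, add_apply, add_sub_add_comm] at hst)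

theorem exists_sameRay_of_diam_range_add_eq [Nonempty X]
    (hd : diam (range (g + h)) = diam (range g) + diam (range h)) :
    ∃ s t, ‖g s - g t‖ = diam (range g) ∧ ‖h s - h t‖ = diam (range h) ∧
      SameRay ℝ (g s - g t) (h s - h t) := by
  obtain ⟨s, t, hst⟩ := exists_norm_sub_eq_diam_range_s11 (g + h)
  exact ⟨s, t, norm_sub_eq_diam_range_of_le (by rw [hst, hd])⟩

end ContinuousMap

open ContinuousMap

section DiamSet

variable {X : Type*} [TopologicalSpace X] {g h : C(X, ℂ)} {x y : X}

theorem norm_sub_eq_diam_of_pair_mem_diamSet (hg : ({x, y} : Set X) ∈ diamSet g) :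
    ‖g x - g y‖ = diam (range g) := by
  obtain ⟨s, t, -, hst, h⟩ := hg
  rcases pair_eq_pair_iff.1 hst.symm with ⟨rfl, rfl⟩ | ⟨rfl, rfl⟩
  · exact h
  · rwa [norm_sub_rev]

theorem ne_of_pair_mem_diamSet (hg : ({x, y} : Set X) ∈ diamSet g) : x ≠ y := by
  rintro rfl
  obtain ⟨s, t, hst, hxy, -⟩ := hg
  rcases pair_eq_pair_iff.1 hxy with ⟨rfl, rfl⟩ | ⟨rfl, rfl⟩ <;> exact hst rfl

theorem pair_mem_diamSet_of_norm_sub_eq_diam (hpos : 0 < diam (range g))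
    (h : ‖g x - g y‖ = diam (range g)) : ({x, y} : Set X) ∈ diamSet g :=
  ⟨x, y, fun hxy => by rw [hxy, sub_self, norm_zero] at h; exact hpos.ne h, rfl, h⟩

theorem diamSet_subset_diamSet_smul (c : ℂ) : diamSet g ⊆ diamSet (c • g) := by
  rintro _ ⟨s, t, hst, rfl, h⟩
  exact ⟨s, t, hst, rfl, by
    rw [ContinuousMap.smul_apply, ContinuousMap.smul_apply, ← smul_sub, norm_smul, h,
      diam_range_smul]⟩

theorem pair_mem_diamSet_add [CompactSpace X] (hg : ({x, y} : Set X) ∈ diamSet g)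
    (hh : ({x, y} : Set X) ∈ diamSet h) (hr : SameRay ℝ (g x - g y) (h x - h y)) :
    ({x, y} : Set X) ∈ diamSet (g + h) := by
  have hgn := norm_sub_eq_diam_of_pair_mem_diamSet hg
  have hhn := norm_sub_eq_diam_of_pair_mem_diamSet hh
  refine ⟨x, y, ne_of_pair_mem_diamSet hg, rfl, ?_⟩
  rw [diam_range_add_eq_of_sameRay hgn hhn hr, ContinuousMap.add_apply, ContinuousMap.add_apply,
    add_sub_add_comm, hr.norm_add, hgn, hhn]

end DiamSet

def IsPeakPair {X : Type*} [TopologicalSpace X] (p : C(X, ℂ)) (x y : X) : Prop :=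
  p x - p y = 2 ∧ diamSet p = {{x, y}}

namespace IsPeakPair

variable {X : Type*} [TopologicalSpace X] {p : C(X, ℂ)} {x y s t : X}

theorem pair_mem (hp : IsPeakPair p x y) : ({x, y} : Set X) ∈ diamSet p :=
  hp.2 ▸ rfl

theorem diam_range_eq (hp : IsPeakPair p x y) : diam (range p) = 2 := by
  rw [← norm_sub_eq_diam_of_pair_mem_diamSet hp.pair_mem, hp.1, Complex.norm_two]

theorem pair_eq (hp : IsPeakPair p x y) (h : ‖p s - p t‖ = diam (range p)) :
    ({s, t} : Set X) = {x, y} := by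
  have := pair_mem_diamSet_of_norm_sub_eq_diam (hp.diam_range_eq ▸ two_pos) h
  rwa [hp.2] at this

end IsPeakPair

section PeakFunctions

variable {X : Type*} [TopologicalSpace X] [CompactSpace X] [T2Space X] [FirstCountableTopology X]
  {x y : X}

theorem exists_continuous_eq_one_iff (hxy : x ≠ y) :
    ∃ u : C(X, ℝ), (∀ z, u z = 1 ↔ z = x) ∧ u y = 0 ∧ ∀ z, u z ∈ Icc (0 : ℝ) 1 := by
  obtain ⟨u, hu1, hu0, -, huI⟩ := exists_continuous_one_zero_of_isCompact_of_isGδ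
    isCompact_singleton (IsGδ.singleton x) isClosed_singleton (disjoint_singleton.2 hxy)
  exact ⟨u, fun z => (Set.ext_iff.1 hu1 z).symm, hu0 rfl, huI⟩

theorem exists_continuous_eq_one_iff_eq_neg_one_iff (hxy : x ≠ y) :
    ∃ p : C(X, ℝ), (∀ z, p z ∈ Icc (-1 : ℝ) 1) ∧ (∀ z, p z = 1 ↔ z = x) ∧
      (∀ z, p z = -1 ↔ z = y) := by
  obtain ⟨u, hu, huy, huI⟩ := exists_continuous_eq_one_iff hxy
  obtain ⟨v, hv, hvx, hvI⟩ := exists_continuous_eq_one_iff hxy.symm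
  refine ⟨u - v, fun z => ?_, fun z => ?_, fun z => ?_⟩ <;>
    simp only [mem_Icc, ContinuousMap.sub_apply] <;>
    obtain ⟨hu₀, hu₁⟩ := huI z <;> obtain ⟨hv₀, hv₁⟩ := hvI z
  · constructor <;> linarith
  · refine ⟨fun h => (hu z).1 (by linarith), ?_⟩
    rintro rfl
    rw [(hu z).2 rfl, hvx, sub_zero]
  · refine ⟨fun h => (hv z).1 (by linarith), ?_⟩
    rintro rfl
    rw [(hv z).2 rfl, huy, zero_sub]

end PeakFunctions

section Complexification

variable {X : Type*} [TopologicalSpace X] {g : C(X, ℝ)} {x y : X}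

theorem ofRealCLM_compLeftContinuous_apply (s : X) :
    Complex.ofRealCLM.compLeftContinuous ℝ X g s = g s :=
  rfl

theorem norm_ofReal_sub (s t : X) :
    ‖Complex.ofRealCLM.compLeftContinuous ℝ X g s -
        Complex.ofRealCLM.compLeftContinuous ℝ X g t‖ = |g s - g t| := by
  simp [← Complex.ofReal_sub, Complex.norm_real]

theorem pair_mem_diamSet_ofReal [CompactSpace X] (hI : ∀ z, g z ∈ Icc (-1 : ℝ) 1) (hx : g x = 1)
    (hy : g y = -1) :
    ({x, y} : Set X) ∈ diamSet (Complex.ofRealCLM.compLeftContinuous ℝ X g) := by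
  refine ⟨x, y, fun h => by norm_num [h, hy] at hx, rfl,
    le_antisymm (norm_sub_le_diam_range_s11 _ x y) (diam_range_le (norm_nonneg _) fun s t => ?_)⟩
  rw [norm_ofReal_sub, norm_ofReal_sub, hx, hy, show |(1 : ℝ) - -1| = 2 by norm_num, abs_le]
  obtain ⟨hs₁, hs₂⟩ := hI s
  obtain ⟨ht₁, ht₂⟩ := hI t
  constructor <;> linarith

theorem isPeakPair_ofReal [CompactSpace X] (hI : ∀ z, g z ∈ Icc (-1 : ℝ) 1)
    (h₁ : ∀ z, g z = 1 ↔ z = x) (h₂ : ∀ z, g z = -1 ↔ z = y) :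
    IsPeakPair (Complex.ofRealCLM.compLeftContinuous ℝ X g) x y := by
  have hx : g x = 1 := (h₁ x).2 rfl
  have hy : g y = -1 := (h₂ y).2 rfl
  have hxy := pair_mem_diamSet_ofReal hI hx hy
  refine ⟨by norm_num [hx, hy], Set.ext fun S => ⟨?_, fun h => (mem_singleton_iff.1 h) ▸ hxy⟩⟩
  rintro ⟨s, t, -, rfl, h⟩
  rw [← norm_sub_eq_diam_of_pair_mem_diamSet hxy, norm_ofReal_sub, norm_ofReal_sub, hx, hy] at h
  rcases abs_sub_eq_two_of_mem_Icc (hI s) (hI t) (by norm_num [h]) with ⟨hs, ht⟩ | ⟨hs, ht⟩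
  · rw [(h₁ s).1 hs, (h₂ t).1 ht, mem_singleton_iff]
  · rw [(h₂ s).1 hs, (h₁ t).1 ht, mem_singleton_iff, pair_comm]

theorem exists_isPeakPair [CompactSpace X] [T2Space X] [FirstCountableTopology X] (hxy : x ≠ y) :
    ∃ p : C(X, ℂ), IsPeakPair p x y := by
  obtain ⟨g, hI, h₁, h₂⟩ := exists_continuous_eq_one_iff_eq_neg_one_iff hxy
  exact ⟨_, isPeakPair_ofReal hI h₁ h₂⟩

end Complexification

namespace DiamPreserving

variable {X : Type*} [TopologicalSpace X] {φ : C(X, ℂ) →ₗ[ℂ] C(X, ℂ)} {x y a b : X}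

theorem diam_range_map_add_eq_iff (hdp : DiamPreserving φ) (g h : C(X, ℂ)) :
    diam (range (φ g + φ h)) = diam (range (φ g)) + diam (range (φ h)) ↔
      diam (range (g + h)) = diam (range g) + diam (range h) := by
  rw [← map_add, hdp, hdp, hdp]

variable [CompactSpace X]

theorem mul_sub_eq_of_mem_Gset (hdp : DiamPreserving φ) {p g : C(X, ℂ)}
    (hp : ({x, y} : Set X) ∈ diamSet p) (hg : ({x, y} : Set X) ∈ diamSet g)
    (hab : ({a, b} : Set X) ∈ Gset φ {x, y}) :
    (p x - p y) * (φ g a - φ g b) = (g x - g y) * (φ p a - φ p b) := by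
  -- `P` and `Q` have the same increment at `(x, y)`; at `(a, b)` the increments of `φ P` and
  -- `φ Q` are then aligned and of equal norm, hence equal.
  set P := (g x - g y) • p
  set Q := (p x - p y) • g
  have hP : ({x, y} : Set X) ∈ diamSet P := diamSet_subset_diamSet_smul _ hp
  have hQ : ({x, y} : Set X) ∈ diamSet Q := diamSet_subset_diamSet_smul _ hg
  have hr : SameRay ℝ (P x - P y) (Q x - Q y) := by
    have : P x - P y = Q x - Q y := by
      simp only [P, Q, ContinuousMap.smul_apply, smul_eq_mul]
      ring
    exact this ▸ SameRay.rfl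
  have hsum : diam (range (φ P + φ Q)) = diam (range (φ P)) + diam (range (φ Q)) :=
    (hdp.diam_range_map_add_eq_iff P Q).2 <| diam_range_add_eq_of_sameRay
      (norm_sub_eq_diam_of_pair_mem_diamSet hP) (norm_sub_eq_diam_of_pair_mem_diamSet hQ) hr
  have hPQ := norm_sub_eq_diam_of_pair_mem_diamSet (hab _ (pair_mem_diamSet_add hP hQ hr))
  rw [map_add, hsum] at hPQ
  obtain ⟨hPn, hQn, hray⟩ := norm_sub_eq_diam_range_of_le hPQ.ge
  have := hray.eq_of_norm_eq <| by
    rw [hPn, hQn, hdp, hdp, diam_range_smul, diam_range_smul,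
      ← norm_sub_eq_diam_of_pair_mem_diamSet hp, ← norm_sub_eq_diam_of_pair_mem_diamSet hg,
      mul_comm]
  simp only [P, Q, map_smul, ContinuousMap.smul_apply, smul_eq_mul] at this
  linear_combination -this

theorem sub_eq_sub_of_forall_mem_Gset (hdp : DiamPreserving φ)
    (hall : ∀ a b, a ≠ b → ({a, b} : Set X) ∈ Gset φ {x, y}) {g g' : C(X, ℂ)}
    (hg : ({x, y} : Set X) ∈ diamSet g) (hg' : ({x, y} : Set X) ∈ diamSet g')
    (h : g x - g y = g' x - g' y) (hne : g x ≠ g y) (a b : X) :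
    g a - g b = g' a - g' b := by
  have hφ (a b : X) : φ (g - g') a = φ (g - g') b := by
    rcases eq_or_ne a b with rfl | hab
    · rfl
    have := hdp.mul_sub_eq_of_mem_Gset hg' hg (hall a b hab)
    rw [← h] at this
    rw [map_sub, ContinuousMap.sub_apply, ContinuousMap.sub_apply]
    linear_combination mul_left_cancel₀ (sub_ne_zero.2 hne) this
  have hdiam : diam (range (g - g')) = 0 := by
    rw [← hdp]
    exact diam_subsingleton (by rintro _ ⟨a, rfl⟩ _ ⟨b, rfl⟩; exact hφ a b)
  have := norm_sub_le_diam_range_s11 (g - g') a b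
  rw [hdiam, norm_le_zero_iff, sub_eq_zero, ContinuousMap.sub_apply,
    ContinuousMap.sub_apply] at this
  linear_combination this

theorem exists_pair_not_mem_Gset [T2Space X] [FirstCountableTopology X] (hdp : DiamPreserving φ)
    (h3 : ∃ a b c : X, a ≠ b ∧ a ≠ c ∧ b ≠ c) (hxy : x ≠ y) :
    ∃ a b : X, a ≠ b ∧ ({a, b} : Set X) ∉ Gset φ {x, y} := by
  obtain ⟨z, hzx, hzy⟩ := exists_ne_ne_of_three h3 x y
  obtain ⟨p, hpI, hp₁, hp₂⟩ := exists_continuous_eq_one_iff_eq_neg_one_iff hxy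
  have hpx : p x = 1 := (hp₁ x).2 rfl
  have hpy : p y = -1 := (hp₂ y).2 rfl
  -- `q - p = (1 - p ^ 2) / 2` vanishes exactly on `{x, y}`
  let q : C(X, ℝ) := (⟨fun r => r + (1 - r ^ 2) / 2, by fun_prop⟩ : C(ℝ, ℝ)).comp p
  have hqI (s : X) : q s ∈ Icc (-1 : ℝ) 1 := by
    obtain ⟨h₁, h₂⟩ := hpI s
    constructor <;> simp only [q, ContinuousMap.comp_apply, ContinuousMap.coe_mk] <;> nlinarith
  by_contra! hall
  have hqp := hdp.sub_eq_sub_of_forall_mem_Gset hall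
    (pair_mem_diamSet_ofReal hqI (by norm_num [q, hpx]) (by norm_num [q, hpy]))
    (pair_mem_diamSet_ofReal hpI hpx hpy) (by norm_num [q, hpx, hpy]) (by norm_num [q, hpx, hpy])
    z x
  simp only [ofRealCLM_compLeftContinuous_apply] at hqp
  have hpz : (1 - p z) * (1 + p z) = 0 := by
    have : q z - q x = p z - p x := by exact_mod_cast hqp
    simp only [q, ContinuousMap.comp_apply, ContinuousMap.coe_mk, hpx] at this
    linear_combination 2 * this
  rcases mul_eq_zero.1 hpz with h | h
  · exact hzx ((hp₁ z).1 (by linarith))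
  · exact hzy ((hp₂ z).1 (by linarith))

theorem diam_range_pos_of_map_eq_Gset [T2Space X] [FirstCountableTopology X]
    (hdp : DiamPreserving φ) (h3 : ∃ a b c : X, a ≠ b ∧ a ≠ c ∧ b ≠ c) (hxy : x ≠ y)
    {f : C(X, ℂ)} (hf : diamSet (φ f) = Gset φ {x, y}) : 0 < diam (range f) := by
  obtain ⟨a, b, hab, hG⟩ := hdp.exists_pair_not_mem_Gset h3 hxy
  refine diam_nonneg.lt_of_ne fun h0 => hG ?_
  rw [← hf]
  refine ⟨a, b, hab, rfl, le_antisymm (norm_sub_le_diam_range_s11 _ a b) ?_⟩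
  rw [hdp, ← h0]
  exact norm_nonneg _

theorem pair_mem_diamSet_of_map_eq_Gset (hdp : DiamPreserving φ) {p f : C(X, ℂ)}
    (hp : IsPeakPair p x y) (hf : diamSet (φ f) = Gset φ {x, y}) (hD : 0 < diam (range f)) :
    ({x, y} : Set X) ∈ diamSet f := by
  have : Nonempty X := ⟨x⟩
  have hφD : 0 < diam (range (φ f)) := by rwa [hdp]
  obtain ⟨a, b, hab⟩ := exists_norm_sub_eq_diam_range_s11 (φ f)
  have hG : ({a, b} : Set X) ∈ Gset φ {x, y} :=
    hf ▸ pair_mem_diamSet_of_norm_sub_eq_diam hφD hab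
  have hpab := norm_sub_eq_diam_of_pair_mem_diamSet (hG p hp.pair_mem)
  have hA : φ p a - φ p b ≠ 0 := by
    rw [← norm_pos_iff, hpab, hdp, hp.diam_range_eq]
    exact two_pos
  set c := (φ f a - φ f b) / (φ p a - φ p b)
  have hc : c ≠ 0 := div_ne_zero (by rw [← norm_pos_iff, hab]; exact hφD) hA
  have hadd : diam (range (f + c • p)) = diam (range f) + diam (range (c • p)) := by
    rw [← hdp.diam_range_map_add_eq_iff, map_smul]
    refine diam_range_add_eq_of_sameRay hab ((norm_smul_sub_eq_diam_range_iff hc).2 hpab) ?_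
    rw [ContinuousMap.smul_apply, ContinuousMap.smul_apply, ← smul_sub, smul_eq_mul,
      div_mul_cancel₀ _ hA]
    exact .rfl
  obtain ⟨s, t, hfst, hpst, -⟩ := exists_sameRay_of_diam_range_add_eq hadd
  rw [← hp.pair_eq ((norm_smul_sub_eq_diam_range_iff hc).1 hpst)]
  exact pair_mem_diamSet_of_norm_sub_eq_diam hD hfst

theorem exists_pair_eq_of_diam_range_add_eq (hdp : DiamPreserving φ) {p f g : C(X, ℂ)}
    (hp : IsPeakPair p x y) (hf : diamSet (φ f) = Gset φ {x, y}) (hD : 0 < diam (range f))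
    (hxyf : ({x, y} : Set X) ∈ diamSet f)
    (hg : diam (range (f + g)) = diam (range f) + diam (range g)) :
    ∃ s t, ({s, t} : Set X) = {x, y} ∧ ‖g s - g t‖ = diam (range g) := by
  have : Nonempty X := ⟨x⟩
  obtain ⟨a, b, hfab, hgab, hray⟩ :=
    exists_sameRay_of_diam_range_add_eq ((hdp.diam_range_map_add_eq_iff f g).2 hg)
  have hG : ({a, b} : Set X) ∈ Gset φ {x, y} :=
    hf ▸ pair_mem_diamSet_of_norm_sub_eq_diam (by rwa [hdp]) hfab
  have hprop := hdp.mul_sub_eq_of_mem_Gset hp.pair_mem hxyf hG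
  rw [hp.1, two_mul] at hprop
  set F := f x - f y
  have hF : F ≠ 0 := by
    rw [← norm_pos_iff, norm_sub_eq_diam_of_pair_mem_diamSet hxyf]
    exact hD
  -- at `(a, b)`, `φ (F • p)` has increment `2 (φ f a - φ f b)`, aligned with that of `φ (f + g)`
  have hfgp : diam (range (f + g + F • p)) = diam (range (f + g)) + diam (range (F • p)) := by
    rw [← hdp.diam_range_map_add_eq_iff, map_smul, map_add]
    refine diam_range_add_eq_of_sameRay ?_ ((norm_smul_sub_eq_diam_range_iff hF).2
      (norm_sub_eq_diam_of_pair_mem_diamSet (hG p hp.pair_mem))) ?_ <;>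
      rw [ContinuousMap.add_apply, ContinuousMap.add_apply, add_sub_add_comm]
    · rw [hray.norm_add, hfab, hgab, ← map_add, hdp, hdp, hdp, hg]
    · rw [ContinuousMap.smul_apply, ContinuousMap.smul_apply, ← smul_sub, smul_eq_mul, ← hprop]
      have := SameRay.rfl.add_left hray.symm
      exact this.add_right this
  obtain ⟨s, t, hst, hpst, -⟩ := exists_sameRay_of_diam_range_add_eq hfgp
  obtain ⟨-, hgst, -⟩ := norm_sub_eq_diam_range_of_le (hg ▸ hst).ge
  exact ⟨s, t, hp.pair_eq ((norm_smul_sub_eq_diam_range_iff hF).1 hpst), hgst⟩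

theorem pair_eq_of_mem_diamSet_of_map_eq_Gset (hdp : DiamPreserving φ) {p q f : C(X, ℂ)}
    {c d : X} (hp : IsPeakPair p x y) (hq : IsPeakPair q c d)
    (hf : diamSet (φ f) = Gset φ {x, y}) (hD : 0 < diam (range f))
    (hxyf : ({x, y} : Set X) ∈ diamSet f) (hcd : ({c, d} : Set X) ∈ diamSet f) :
    ({c, d} : Set X) = {x, y} := by
  have hfcd := norm_sub_eq_diam_of_pair_mem_diamSet hcd
  set ν := (f c - f d) / 2
  have hν : ν ≠ 0 := div_ne_zero (by rw [← norm_pos_iff, hfcd]; exact hD) two_ne_zero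
  have hνq : (ν • q) c - (ν • q) d = f c - f d := by
    rw [ContinuousMap.smul_apply, ContinuousMap.smul_apply, ← smul_sub, hq.1, smul_eq_mul,
      div_mul_cancel₀ _ two_ne_zero]
  have hqcd : ‖(ν • q) c - (ν • q) d‖ = diam (range (ν • q)) := by
    rw [norm_smul_sub_eq_diam_range_iff hν, hq.1, hq.diam_range_eq, Complex.norm_two]
  obtain ⟨s, t, hst, hqst⟩ := hdp.exists_pair_eq_of_diam_range_add_eq hp hf hD hxyf
    (diam_range_add_eq_of_sameRay hfcd hqcd (hνq ▸ .rfl))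
  rw [← hq.pair_eq ((norm_smul_sub_eq_diam_range_iff hν).1 hqst), hst]

end DiamPreserving

theorem diamSet_eq_of_image_eq_Gset_general
    {X : Type*} [TopologicalSpace X] [CompactSpace X] [T2Space X]
    [FirstCountableTopology X]
    (h3 : ∃ a b c : X, a ≠ b ∧ a ≠ c ∧ b ≠ c)
    (φ : C(X, ℂ) →ₗ[ℂ] C(X, ℂ))
    (hdp : DiamPreserving (⇑φ))
    (x y : X) (hxy : x ≠ y) (f : C(X, ℂ))
    (hf : diamSet (φ f) = Gset (⇑φ) ({x, y} : Set X)) :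
    diamSet f = {({x, y} : Set X)} := by
  obtain ⟨p, hp⟩ := exists_isPeakPair hxy
  have hD := hdp.diam_range_pos_of_map_eq_Gset h3 hxy hf
  have hxyf := hdp.pair_mem_diamSet_of_map_eq_Gset hp hf hD
  refine Set.ext fun S => ⟨fun hS => ?_, fun hS => (mem_singleton_iff.1 hS) ▸ hxyf⟩
  obtain ⟨c, d, hcd, rfl, -⟩ := id hS
  obtain ⟨q, hq⟩ := exists_isPeakPair hcd
  exact hdp.pair_eq_of_mem_diamSet_of_map_eq_Gset hp hq hf hD hxyf hS

/-- Step 4: if `S(φ(f)) = G({x,y})`, then `S(f) = {{x,y}}`. -/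
theorem diamSet_eq_of_image_eq_Gset
    {X : Type*} [TopologicalSpace X] [CompactSpace X] [T2Space X]
    [FirstCountableTopology X]
    (h3 : ∃ a b c : X, a ≠ b ∧ a ≠ c ∧ b ≠ c)
    (φ : C(X, ℂ) →ₗ[ℂ] C(X, ℂ)) (hbij : Function.Bijective φ)
    (hdp : DiamPreserving (⇑φ))
    (x y : X) (hxy : x ≠ y) (f : C(X, ℂ))
    (hf : diamSet (φ f) = Gset (⇑φ) ({x, y} : Set X)) :
    diamSet f = {({x, y} : Set X)} :=
  diamSet_eq_of_image_eq_Gset_general h3 φ hdp x y hxy f hf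
end
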